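/- Let ⊙ be a pseudo-multiplication on [0,∞] and ν a σ-maxitive measure on a σ-algebra 𝓑. Then for every 𝓑-measurable f : E → [0,∞], every r ∈ [0,∞), and every B ∈ 𝓑: (i) the integral of the indicator 1_B equals ν(B); (ii) homogeneity: ∫_E (r ⊙ f) ⊙ dν = r ⊙ ∫_E f ⊙ dν; (iii) σ-maxitivity in the integrand: for every sequence of 𝓑-measurable maps fₙ : E → [0,∞], ∫_E (supₙ fₙ) ⊙ dν = supₙ ∫_E fₙ ⊙ dν; (iv) the set function B ↦ ∫_B f ⊙ dν is a σ-maxitive measure on 𝓑. -/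

import Mathlib

/-! The integral is a supremum over levels `t < ∞` of `t ⊙ ν {f > t}`. For finite `s` the map
`s ⊙ ·` is continuous, hence commutes with suprema; with σ-maxitivity of `ν` this pulls suprema of
sets or of integrands out of the integral level by level. For homogeneity, left-continuity of
`r ⊙ ·` makes `{r ⊙ f > s}` a super-level set `{f > a}` of `f` itself, and the right-continuity
`ν {f > a} = sup_{t > a} ν {f > t}` of the distribution function (again from σ-maxitivity) compares
its contribution with the terms `(r ⊙ t) ⊙ ν {f > t}` of `r ⊙ ∫ f ⊙ dν`. -/

open scoped ENNReal
open Set Filter MeasureTheory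

variable {E : Type*}

/-- `f : E → [0,∞]` is `𝓑`-measurable: `{f > t}` is measurable for every `t`. -/
def Premeasurable [MeasurableSpace E] (f : E → ℝ≥0∞) : Prop :=
  ∀ t : ℝ≥0∞, MeasurableSet {x | t < f x}

/-- A maxitive measure on the σ-algebra of measurable subsets of `E`. -/
def Maxitive [MeasurableSpace E] (ν : Set E → ℝ≥0∞) : Prop :=
  ν ∅ = 0 ∧ ∀ A B : Set E, MeasurableSet A → MeasurableSet B →
    ν (A ∪ B) = max (ν A) (ν B)

/-- A σ-maxitive measure: a maxitive measure commuting with countable nondecreasing unions. -/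
def SigmaMaxitive [MeasurableSpace E] (ν : Set E → ℝ≥0∞) : Prop :=
  Maxitive ν ∧ ∀ B : ℕ → Set E, (∀ n, MeasurableSet (B n)) → Monotone B →
    ν (⋃ n, B n) = ⨆ n, ν (B n)

/-- `N` is `τ`-negligible: it is contained in a measurable set of `τ`-measure zero. -/
def Negligible [MeasurableSpace E] (τ : Set E → ℝ≥0∞) (N : Set E) : Prop :=
  ∃ B : Set E, MeasurableSet B ∧ N ⊆ B ∧ τ B = 0

/-- The `τ`-essential supremum of `f` over `B`: `inf { t > 0 : B ∩ {f > t} is τ-negligible }`. -/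
noncomputable def essSupOn [MeasurableSpace E] (τ : Set E → ℝ≥0∞) (f : E → ℝ≥0∞)
    (B : Set E) : ℝ≥0∞ :=
  sInf {t : ℝ≥0∞ | 0 < t ∧ Negligible τ (B ∩ {x | t < f x})}

/-- `ν ≪ τ`: absolute continuity. -/
def AbsCont [MeasurableSpace E] (ν τ : Set E → ℝ≥0∞) : Prop :=
  ∀ B : Set E, MeasurableSet B → τ B = 0 → ν B = 0

/-- `ν ⋘ τ`: strong absolute continuity, i.e. `ν` has a measurable relative density
with respect to `τ`. -/
def StrongAbsCont [MeasurableSpace E] (ν τ : Set E → ℝ≥0∞) : Prop :=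
  ∃ f : E → ℝ≥0∞, Premeasurable f ∧ ∀ B : Set E, MeasurableSet B → ν B = essSupOn τ f B

/-- `c` is a cardinal density of `ν`: `ν B = sup_{x ∈ B} c x` for every measurable `B`. -/
def IsCardinalDensity [MeasurableSpace E] (ν : Set E → ℝ≥0∞) (c : E → ℝ≥0∞) : Prop :=
  ∀ B : Set E, MeasurableSet B → ν B = ⨆ x ∈ B, c x

/-- `τ` is essential: there exists a σ-finite σ-additive measure `m` with the same
null measurable sets. -/
def Essential [MeasurableSpace E] (τ : Set E → ℝ≥0∞) : Prop :=
  ∃ m : Measure E, SigmaFinite m ∧ ∀ B : Set E, MeasurableSet B → (0 < τ B ↔ 0 < m B)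

/-- A σ-ideal of the σ-algebra of measurable sets. -/
def SigmaIdeal [MeasurableSpace E] (I : Set (Set E)) : Prop :=
  I.Nonempty ∧ (∀ S ∈ I, MeasurableSet S) ∧
  (∀ f : ℕ → Set E, (∀ n, f n ∈ I) → (⋃ n, f n) ∈ I) ∧
  (∀ B S : Set E, MeasurableSet B → S ∈ I → B ⊆ S → B ∈ I)

/-- `τ` is σ-principal: every σ-ideal has a greatest element modulo `τ`-negligible sets. -/
def SigmaPrincipal [MeasurableSpace E] (τ : Set E → ℝ≥0∞) : Prop :=
  ∀ I : Set (Set E), SigmaIdeal I → ∃ L ∈ I, ∀ S ∈ I, Negligible τ (S \ L)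

/-- A pseudo-multiplication on `[0,∞]`. -/
structure PseudoMul where
  op : ℝ≥0∞ → ℝ≥0∞ → ℝ≥0∞
  assoc : ∀ a b c, op (op a b) c = op a (op b c)
  contOn : ContinuousOn (fun q : ℝ≥0∞ × ℝ≥0∞ => op q.1 q.2) (Set.Ioo 0 ⊤ ×ˢ Set.univ)
  contLeft : ∀ t, ContinuousOn (fun s => op s t) (Set.Ioi 0)
  monoLeft : ∀ t, Monotone fun s => op s t
  monoRight : ∀ s, Monotone (op s)
  one : ℝ≥0∞
  one_op : ∀ t, op one t = t
  eq_zero : ∀ s t, op s t = 0 → s = 0 ∨ t = 0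
  zero_op : ∀ t, op 0 t = 0
  op_zero : ∀ t, op t 0 = 0

/-- `t` is `⊙`-finite: `inf_{s > 0} s ⊙ t = 0`. -/
def OdotFinite (p : PseudoMul) (t : ℝ≥0∞) : Prop :=
  (⨅ s ∈ Set.Ioi (0 : ℝ≥0∞), p.op s t) = 0

/-- The idempotent `⊙`-integral `∫_B f ⊙ dτ = sup_{t ∈ [0,∞)} t ⊙ τ (B ∩ {f > t})`. -/
noncomputable def iInt [MeasurableSpace E] (p : PseudoMul) (τ : Set E → ℝ≥0∞)
    (f : E → ℝ≥0∞) (B : Set E) : ℝ≥0∞ :=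
  ⨆ t ∈ Set.Iio (⊤ : ℝ≥0∞), p.op t (τ (B ∩ {x | t < f x}))

/-- `ν ≪_⊙ τ`: `ν B ≤ ∞ ⊙ τ B` for every measurable `B`. -/
def OdotAbsCont [MeasurableSpace E] (p : PseudoMul) (ν τ : Set E → ℝ≥0∞) : Prop :=
  ∀ B : Set E, MeasurableSet B → ν B ≤ p.op ⊤ (τ B)

/-- `ν` is semi-`⊙`-finite. -/
def SemiOdotFinite [MeasurableSpace E] (p : PseudoMul) (ν : Set E → ℝ≥0∞) : Prop :=
  ∀ B : Set E, MeasurableSet B →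
    ν B = ⨆ A ∈ {A : Set E | MeasurableSet A ∧ A ⊆ B ∧ OdotFinite p (ν A)}, ν A

/-- `τ` is σ-`⊙`-finite. -/
def SigmaOdotFinite [MeasurableSpace E] (p : PseudoMul) (τ : Set E → ℝ≥0∞) : Prop :=
  ∃ B : ℕ → Set E, (∀ n, MeasurableSet (B n)) ∧ (⋃ n, B n) = Set.univ ∧
    ∀ n, OdotFinite p (τ (B n))

/-- Continuity from below. -/
def ContFromBelow [MeasurableSpace E] (ν : Set E → ℝ≥0∞) : Prop :=
  ∀ B : ℕ → Set E, (∀ n, MeasurableSet (B n)) → Monotone B →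
    Tendsto (fun n => ν (B n)) atTop (nhds (ν (⋃ n, B n)))

/-- Continuity from above (no finiteness assumption). -/
def ContFromAbove [MeasurableSpace E] (ν : Set E → ℝ≥0∞) : Prop :=
  ∀ B : ℕ → Set E, (∀ n, MeasurableSet (B n)) → Antitone B →
    Tendsto (fun n => ν (B n)) atTop (nhds (ν (⋂ n, B n)))

/-- An optimal measure: a maxitive measure continuous from below and from above. -/
def Optimal [MeasurableSpace E] (ν : Set E → ℝ≥0∞) : Prop :=
  Maxitive ν ∧ ContFromBelow ν ∧ ContFromAbove ν

open Topology

theorem ENNReal.exists_lt_of_lt_of_continuousWithinAt {g : ℝ≥0∞ → ℝ≥0∞} {y s : ℝ≥0∞}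
    (hg : ContinuousWithinAt g (Iio y) y) (hg0 : g 0 = 0) (h : s < g y) :
    ∃ t < y, s < g t := by
  have hy : 0 < y := pos_iff_ne_zero.2 fun hy => by simp [hy, hg0] at h
  have : (𝓝[<] y).NeBot := nhdsLT_neBot_of_exists_lt ⟨0, hy⟩
  obtain ⟨t, hst, hty⟩ := ((hg.eventually (lt_mem_nhds h)).and self_mem_nhdsWithin).exists
  exact ⟨t, hty, hst⟩

theorem setOf_lt_eq_Ioi_sInf {α β : Type*} [CompleteLinearOrder α] [Preorder β] {g : α → β}
    (hg : Monotone g) {s : β} (hs : ∀ y, s < g y → ∃ t < y, s < g t) :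
    {y | s < g y} = Ioi (sInf {y | s < g y}) := by
  ext y
  constructor
  · intro hy
    obtain ⟨t, hty, hst⟩ := hs y hy
    exact (sInf_le (α := α) hst).trans_lt hty
  · intro hy
    obtain ⟨t, hst, hty⟩ := sInf_lt_iff.1 hy
    exact hst.trans_le (hg hty.le)

namespace PseudoMul

variable (p : PseudoMul)

theorem continuousAt_op {s : ℝ≥0∞} (h0 : 0 < s) (h1 : s < ⊤) (y : ℝ≥0∞) :
    ContinuousAt (p.op s) y :=
  (p.contOn.continuousAt ((isOpen_Ioo.prod isOpen_univ).mem_nhds ⟨⟨h0, h1⟩, mem_univ y⟩)).comp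
    (Continuous.prodMk_right s).continuousAt

theorem op_iSup {s : ℝ≥0∞} (hs : s < ⊤) {ι : Sort*} (g : ι → ℝ≥0∞) :
    p.op s (⨆ i, g i) = ⨆ i, p.op s (g i) := by
  rcases eq_zero_or_pos s with rfl | h0
  · simp [p.zero_op]
  · exact Monotone.map_iSup_of_continuousAt (p.continuousAt_op h0 hs _) (p.monoRight s)
      (p.op_zero s)

theorem exists_lt_of_lt_op_left {a c s : ℝ≥0∞} (h : s < p.op a c) : ∃ t < a, s < p.op t c := by
  refine ENNReal.exists_lt_of_lt_of_continuousWithinAt ?_ (p.zero_op c) h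
  have ha : 0 < a := pos_iff_ne_zero.2 fun ha => by simp [ha, p.zero_op] at h
  exact ((p.contLeft c).continuousAt (isOpen_Ioi.mem_nhds ha)).continuousWithinAt

theorem exists_lt_of_lt_op_right {r y s : ℝ≥0∞} (hr : r < ⊤) (h : s < p.op r y) :
    ∃ t < y, s < p.op r t := by
  refine ENNReal.exists_lt_of_lt_of_continuousWithinAt ?_ (p.op_zero r) h
  have h0 : 0 < r := pos_iff_ne_zero.2 fun h0 => by simp [h0, p.zero_op] at h
  exact (p.continuousAt_op h0 hr y).continuousWithinAt

theorem setOf_lt_op_eq_Ioi {r : ℝ≥0∞} (hr : r < ⊤) (s : ℝ≥0∞) :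
    {y | s < p.op r y} = Ioi (sInf {y | s < p.op r y}) :=
  setOf_lt_eq_Ioi_sInf (p.monoRight r) fun _ => p.exists_lt_of_lt_op_right hr

end PseudoMul

section Maxitive

variable [MeasurableSpace E] {ν : Set E → ℝ≥0∞}

theorem Premeasurable.op_left {f : E → ℝ≥0∞} (hf : Premeasurable f) (p : PseudoMul)
    {r : ℝ≥0∞} (hr : r < ⊤) : Premeasurable fun x => p.op r (f x) := fun s => by
  change MeasurableSet (f ⁻¹' {y | s < p.op r y})
  rw [p.setOf_lt_op_eq_Ioi hr s]
  exact hf _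

theorem Maxitive.mono (hν : Maxitive ν) {A B : Set E} (hA : MeasurableSet A)
    (hB : MeasurableSet B) (hAB : A ⊆ B) : ν A ≤ ν B := by
  rw [← union_eq_self_of_subset_left hAB, hν.2 A B hA hB]
  exact le_max_left _ _

theorem MeasurableSet.accumulate {A : ℕ → Set E} (hA : ∀ n, MeasurableSet (A n)) (n : ℕ) :
    MeasurableSet (accumulate A n) :=
  .biUnion (to_countable _) fun k _ => hA k

theorem Maxitive.apply_accumulate_le (hν : Maxitive ν) {A : ℕ → Set E}
    (hA : ∀ n, MeasurableSet (A n)) (n : ℕ) : ν (accumulate A n) ≤ ⨆ k, ν (A k) := by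
  induction n with
  | zero => exact (accumulate_zero_nat A).symm ▸ le_iSup (ν ∘ A) 0
  | succ n ih =>
    rw [accumulate_succ, hν.2 _ _ (.accumulate hA n) (hA _)]
    exact max_le ih (le_iSup (ν ∘ A) _)

theorem SigmaMaxitive.apply_iUnion (hν : SigmaMaxitive ν) {A : ℕ → Set E}
    (hA : ∀ n, MeasurableSet (A n)) : ν (⋃ n, A n) = ⨆ n, ν (A n) := by
  refine le_antisymm ?_ (iSup_le fun n => hν.1.mono (hA n) (.iUnion hA) (subset_iUnion A n))
  rw [← iUnion_accumulate, hν.2 _ (.accumulate hA) monotone_accumulate]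
  exact iSup_le (hν.1.apply_accumulate_le hA)

theorem SigmaMaxitive.apply_setOf_lt (hν : SigmaMaxitive ν) {f : E → ℝ≥0∞}
    (hf : Premeasurable f) (a : ℝ≥0∞) :
    ν {x | a < f x} = ⨆ t ∈ Ioi a, ν {x | t < f x} := by
  refine le_antisymm ?_
    (iSup₂_le fun t ht => hν.1.mono (hf t) (hf a) fun x (hx : t < f x) => ht.trans hx)
  rcases eq_top_or_lt_top a with rfl | ha
  · simp [hν.1.1]
  obtain ⟨u, hu_anti, hu_mem, hu_lim⟩ := exists_seq_strictAnti_tendsto' ha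
  have hunion : {x | a < f x} = ⋃ n, {x | u n < f x} := by
    ext x
    simp only [mem_iUnion]
    exact ⟨fun hx => (hu_lim.eventually (gt_mem_nhds hx)).exists,
      fun ⟨n, hn⟩ => (hu_mem n).1.trans hn⟩
  rw [hunion, hν.2 _ (fun n => hf _) fun m n hmn x hx => (hu_anti.antitone hmn).trans_lt hx]
  exact iSup_le fun n => le_iSup₂_of_le (u n) (hu_mem n).1 le_rfl

theorem le_iInt (p : PseudoMul) (ν : Set E → ℝ≥0∞) (f : E → ℝ≥0∞) (B : Set E) {t : ℝ≥0∞}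
    (ht : t < ⊤) : p.op t (ν (B ∩ {x | t < f x})) ≤ iInt p ν f B :=
  le_iSup₂ (f := fun t (_ : t < ⊤) => p.op t (ν (B ∩ {x | t < f x}))) t ht

theorem iInt_eq_iSup_of_levelSet_eq {p : PseudoMul} {ι : Sort*} {F : E → ℝ≥0∞} {B : Set E}
    {f : ι → E → ℝ≥0∞} {A : ι → Set E}
    (h : ∀ t < ⊤, ν (B ∩ {x | t < F x}) = ⨆ i, ν (A i ∩ {x | t < f i x})) :
    iInt p ν F B = ⨆ i, iInt p ν (f i) (A i) := by
  calc iInt p ν F B = ⨆ t ∈ Iio ⊤, ⨆ i, p.op t (ν (A i ∩ {x | t < f i x})) :=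
        iSup_congr fun t => iSup_congr fun ht => by rw [h t ht, p.op_iSup ht]
    _ = ⨆ i, iInt p ν (f i) (A i) := by
        simp only [iInt]
        exact (iSup_congr fun t => iSup_comm).trans iSup_comm

theorem iInt_indicator_const (p : PseudoMul) (hν : ν ∅ = 0) (B : Set E) (c : ℝ≥0∞) :
    iInt p ν (B.indicator fun _ => c) univ = p.op c (ν B) := by
  have hlevel : ∀ t, univ ∩ {x | t < B.indicator (fun _ => c) x} = if t < c then B else ∅ := by
    intro t
    ext x
    by_cases hx : x ∈ B <;> split_ifs <;> simp_all
  refine le_antisymm (iSup₂_le fun t _ => ?_) (le_of_forall_lt fun s hs => ?_)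
  · rw [hlevel]
    split_ifs with htc
    · exact p.monoLeft _ htc.le
    · simp [hν, p.op_zero]
  · obtain ⟨t, htc, hst⟩ := p.exists_lt_of_lt_op_left hs
    refine hst.trans_le ?_
    simpa [hlevel, htc] using le_iInt p ν (B.indicator fun _ => c) univ (htc.trans_le le_top)

theorem Maxitive.maxitive_iInt (hν : Maxitive ν) (p : PseudoMul) {f : E → ℝ≥0∞}
    (hf : Premeasurable f) : Maxitive fun B => iInt p ν f B := by
  refine ⟨by simp [iInt, hν.1, p.op_zero], fun A B hA hB => ?_⟩
  change iInt p ν f (A ∪ B) = iInt p ν f A ⊔ iInt p ν f B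
  simp only [iInt, ← iSup_sup_eq]
  refine iSup_congr fun t => iSup_congr fun _ => ?_
  rw [union_inter_distrib_right, hν.2 _ _ (hA.inter (hf t)) (hB.inter (hf t)),
    (p.monoRight t).map_max]

theorem SigmaMaxitive.sigmaMaxitive_iInt (hν : SigmaMaxitive ν) (p : PseudoMul) {f : E → ℝ≥0∞}
    (hf : Premeasurable f) : SigmaMaxitive fun B => iInt p ν f B :=
  ⟨hν.1.maxitive_iInt p hf, fun B hB hmono => iInt_eq_iSup_of_levelSet_eq fun t _ => by
    rw [iUnion_inter]
    exact hν.2 _ (fun n => (hB n).inter (hf t))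
      fun m n hmn => inter_subset_inter_left _ (hmono hmn)⟩

theorem SigmaMaxitive.iInt_iSup (hν : SigmaMaxitive ν) (p : PseudoMul) {f : ℕ → E → ℝ≥0∞}
    (hf : ∀ n, Premeasurable (f n)) :
    iInt p ν (fun x => ⨆ n, f n x) univ = ⨆ n, iInt p ν (f n) univ :=
  iInt_eq_iSup_of_levelSet_eq fun t _ => by
    simp only [univ_inter, lt_iSup_iff, ofPred_exists]
    exact hν.apply_iUnion fun n => hf n t

theorem SigmaMaxitive.iInt_op_left (hν : SigmaMaxitive ν) (p : PseudoMul) {f : E → ℝ≥0∞}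
    (hf : Premeasurable f) {r : ℝ≥0∞} (hr : r < ⊤) :
    iInt p ν (fun x => p.op r (f x)) univ = p.op r (iInt p ν f univ) := by
  have hrhs : p.op r (iInt p ν f univ) = ⨆ t ∈ Iio ⊤, p.op (p.op r t) (ν {x | t < f x}) := by
    simp only [iInt, univ_inter, p.op_iSup hr, p.assoc]
  rw [hrhs]
  refine le_antisymm (iSup₂_le fun s hs => ?_)
    (iSup₂_le fun t ht => le_of_forall_lt fun s hs' => ?_)
  · have hlevel : {x | s < p.op r (f x)} = {x | sInf {y | s < p.op r y} < f x} :=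
      congrArg (f ⁻¹' ·) (p.setOf_lt_op_eq_Ioi hr s)
    rw [univ_inter, hlevel, hν.apply_setOf_lt hf]
    simp only [p.op_iSup hs]
    refine iSup₂_le fun t hat => ?_
    rcases eq_top_or_lt_top t with rfl | ht
    · simp [hν.1.1, p.op_zero]
    · have hst : s < p.op r t := (p.setOf_lt_op_eq_Ioi hr s).ge hat
      exact (p.monoLeft _ hst.le).trans
        (le_iSup₂ (f := fun t (_ : t < ⊤) => p.op (p.op r t) (ν {x | t < f x})) t ht)
  · obtain ⟨u, hu, hsu⟩ := p.exists_lt_of_lt_op_left hs'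
    have hsub : {x | t < f x} ⊆ univ ∩ {x | u < p.op r (f x)} :=
      fun x (hx : t < f x) => ⟨trivial, hu.trans_le (p.monoRight r hx.le)⟩
    calc s < p.op u (ν {x | t < f x}) := hsu
      _ ≤ p.op u (ν (univ ∩ {x | u < p.op r (f x)})) :=
        p.monoRight u (hν.1.mono (hf t) (.inter .univ (hf.op_left p hr u)) hsub)
      _ ≤ _ := le_iInt p ν _ univ (hu.trans_le le_top)

end Maxitive

/-- Elementary properties of the idempotent `⊙`-integral with respect to a σ-maxitive
measure: value on indicators, homogeneity, σ-maxitivity in the integrand, and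
σ-maxitivity of `B ↦ ∫_B f ⊙ dν`. -/
theorem iInt_properties [MeasurableSpace E] (p : PseudoMul) (ν : Set E → ℝ≥0∞)
    (hν : SigmaMaxitive ν) :
    (∀ B : Set E, MeasurableSet B →
      iInt p ν (B.indicator fun _ => p.one) Set.univ = ν B) ∧
    (∀ f : E → ℝ≥0∞, Premeasurable f → ∀ r ∈ Set.Iio (⊤ : ℝ≥0∞),
      iInt p ν (fun x => p.op r (f x)) Set.univ = p.op r (iInt p ν f Set.univ)) ∧
    (∀ f : ℕ → E → ℝ≥0∞, (∀ n, Premeasurable (f n)) →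
      iInt p ν (fun x => ⨆ n, f n x) Set.univ = ⨆ n, iInt p ν (f n) Set.univ) ∧
    (∀ f : E → ℝ≥0∞, Premeasurable f → SigmaMaxitive (fun B => iInt p ν f B)) :=
  ⟨fun B _ => by rw [iInt_indicator_const p hν.1.1, p.one_op],
    fun _ hf _ hr => hν.iInt_op_left p hf hr,
    fun _ hf => hν.iInt_iSup p hf,
    fun _ hf => hν.sigmaMaxitive_iInt p hf⟩
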